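/- Let U ⊆ ℂ^n be open with u_a ≠ u_b for every u ∈ U and all a ≠ b. Let A : U → M_n(ℂ) and ω_1^0,…,ω_n^0 : U → M_n(ℂ) be differentiable, and suppose that for all u ∈ U, all j, and all k ≠ j: (i) [Λ(u), ω_j^0(u)] = [E_j, A(u)]; (ii) ∂A/∂u_j = [ω_j^0, A]; (iii) ∂ω_j^0/∂u_k + ω_j^0 ω_k^0 = ∂ω_k^0/∂u_j + ω_k^0 ω_j^0; (iv) [E_j, ω_k^0] = [E_k, ω_j^0]. Define ω_0(z,u) = Λ(u) + A(u)/z and ω_j(z,u) = zE_j + ω_j^0(u). Then for all u ∈ U, all z ≠ 0, all j, and all k ≠ j: ∂ω_0/∂u_j + ω_0 ω_j = ∂ω_j/∂z + ω_j ω_0 and ∂ω_j/∂u_k + ω_j ω_k = ∂ω_k/∂u_j + ω_k ω_j. -/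

import Mathlib

open Matrix

/-- Partial derivative in the `j`-th coordinate direction of a matrix-valued function
of `u ∈ ℂ^N`, computed entrywise. -/
noncomputable def mpdv {N n : ℕ} (j : Fin N) (A : (Fin N → ℂ) → Matrix (Fin n) (Fin n) ℂ)
    (u : Fin N → ℂ) : Matrix (Fin n) (Fin n) ℂ :=
  Matrix.of fun a b => fderiv ℂ (fun v => A v a b) u (Pi.single j 1)

lemma stdBasis_eq_diag {n : ℕ} (j : Fin n) :
    Matrix.single j j (1:ℂ) = Matrix.diagonal (Pi.single j 1) := by
  ext a b
  simp [Matrix.single, Matrix.diagonal_apply, Pi.single_apply]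
  aesop

lemma diag_comm {n : ℕ} (d e : Fin n → ℂ) :
    Matrix.diagonal d * Matrix.diagonal e = Matrix.diagonal e * Matrix.diagonal d := by
  rw [Matrix.diagonal_mul_diagonal, Matrix.diagonal_mul_diagonal]
  exact congrArg _ (funext fun i => mul_comm _ _)

lemma mpdv_const_add {n : ℕ} (k : Fin n) (C : Matrix (Fin n) (Fin n) ℂ)
    (F : (Fin n → ℂ) → Matrix (Fin n) (Fin n) ℂ) (u : Fin n → ℂ) :
    mpdv k (fun v => C + F v) u = mpdv k F u := by
  ext a b
  simp only [mpdv, Matrix.of_apply, Matrix.add_apply]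
  rw [fderiv_const_add]

lemma fderiv_diag_entry {n : ℕ} (j a b : Fin n) (u : Fin n → ℂ) :
    fderiv ℂ (fun v : Fin n → ℂ => Matrix.diagonal v a b) u (Pi.single j 1)
      = Matrix.single j j (1:ℂ) a b := by
  rcases eq_or_ne a b with rfl | hab
  · have : (fun v : Fin n → ℂ => Matrix.diagonal v a a)
        = (ContinuousLinearMap.proj a : (Fin n → ℂ) →L[ℂ] ℂ) := by
      ext v; simp [Matrix.diagonal_apply_eq]
    rw [this, ContinuousLinearMap.fderiv]
    simp [Matrix.single, Pi.single_apply, eq_comm]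
  · have : (fun v : Fin n → ℂ => Matrix.diagonal v a b) = fun _ => (0:ℂ) := by
      ext v; simp [Matrix.diagonal_apply_ne _ hab]
    rw [this, fderiv_fun_const]
    simp [Matrix.single]
    aesop

lemma diff_diag_entry {n : ℕ} (a b : Fin n) (u : Fin n → ℂ) :
    DifferentiableAt ℂ (fun v : Fin n → ℂ => Matrix.diagonal v a b) u := by
  rcases eq_or_ne a b with rfl | hab
  · have : (fun v : Fin n → ℂ => Matrix.diagonal v a a)
        = (ContinuousLinearMap.proj a : (Fin n → ℂ) →L[ℂ] ℂ) := by
      ext v; simp [Matrix.diagonal_apply_eq]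
    rw [this]
    exact (ContinuousLinearMap.proj a : (Fin n → ℂ) →L[ℂ] ℂ).differentiableAt
  · have : (fun v : Fin n → ℂ => Matrix.diagonal v a b) = fun _ => (0:ℂ) := by
      ext v; simp [Matrix.diagonal_apply_ne _ hab]
    rw [this]; exact differentiableAt_const _

lemma deriv_lin_entry {n : ℕ} (j : Fin n) (M : Matrix (Fin n) (Fin n) ℂ) (z : ℂ) :
    (Matrix.of fun a b =>
        deriv (fun w : ℂ => (w • Matrix.single j j (1 : ℂ) + M) a b) z)
      = Matrix.single j j (1:ℂ) := by
  ext a b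
  simp only [Matrix.of_apply, Matrix.add_apply, Matrix.smul_apply, smul_eq_mul]
  have : HasDerivAt (fun w : ℂ => w * Matrix.single j j (1:ℂ) a b + M a b)
      (Matrix.single j j (1:ℂ) a b) z := by
    simpa using ((hasDerivAt_id z).mul_const (Matrix.single j j (1:ℂ) a b)).add_const
      (M a b)
  exact this.deriv

lemma aux1 {R : Type*} [Ring R] [Algebra ℂ R] (z : ℂ) (hz : z ≠ 0) (L E A W : R)
    (h1 : L * W - W * L = E * A - A * E) (hc : L * E = E * L) :
    (E + z⁻¹ • (W * A - A * W)) + (L + z⁻¹ • A) * (z • E + W)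
      = E + (z • E + W) * (L + z⁻¹ • A) := by
  rw [sub_eq_iff_eq_add] at h1
  simp only [mul_add, add_mul, smul_sub, mul_smul_comm, smul_mul_assoc, smul_smul]
  rw [h1, hc]
  match_scalars <;> field_simp <;> ring

lemma aux2 {R : Type*} [Ring R] [Algebra ℂ R] (z : ℂ) (Ej Ek Wj Wk Dj Dk : R)
    (h3 : Dj + Wj * Wk = Dk + Wk * Wj)
    (h4 : Ej * Wk - Wk * Ej = Ek * Wj - Wj * Ek)
    (hc : Ej * Ek = Ek * Ej) :
    Dj + (z • Ej + Wj) * (z • Ek + Wk) = Dk + (z • Ek + Wk) * (z • Ej + Wj) := by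
  have h3' : Dj = Dk + Wk * Wj - Wj * Wk := eq_sub_of_add_eq h3
  have h4' : Ej * Wk = Ek * Wj - Wj * Ek + Wk * Ej := sub_eq_iff_eq_add.mp h4
  simp only [mul_add, add_mul, mul_smul_comm, smul_mul_assoc, smul_smul]
  rw [h3', h4', hc]
  module

/-- Converse direction of Lemma B.2: conditions (i) `[Λ, ω_j⁰] = [E_j, A]`,
(ii) `∂A/∂u_j = [ω_j⁰, A]`, (iii) the Frobenius condition for the `ω_j⁰`, and
(iv) `[E_j, ω_k⁰] = [E_k, ω_j⁰]` imply the Frobenius integrability of the Pfaffian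
system with `ω_0(z,u) = Λ(u) + A(u)/z` and `ω_j(z,u) = zE_j + ω_j⁰(u)`. -/
theorem stmt6 {n : ℕ} (U : Set (Fin n → ℂ)) (hU : IsOpen U)
    (hdist : ∀ u ∈ U, ∀ a b : Fin n, a ≠ b → u a ≠ u b)
    (A : (Fin n → ℂ) → Matrix (Fin n) (Fin n) ℂ)
    (ω0 : Fin n → (Fin n → ℂ) → Matrix (Fin n) (Fin n) ℂ)
    (hA : ∀ a b, DifferentiableOn ℂ (fun u => A u a b) U)
    (hω0 : ∀ (j : Fin n) (a b : Fin n), DifferentiableOn ℂ (fun u => ω0 j u a b) U)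
    (hi : ∀ u ∈ U, ∀ j : Fin n,
      Matrix.diagonal u * ω0 j u - ω0 j u * Matrix.diagonal u
        = Matrix.single j j (1 : ℂ) * A u - A u * Matrix.single j j (1 : ℂ))
    (hii : ∀ u ∈ U, ∀ j : Fin n, mpdv j A u = ω0 j u * A u - A u * ω0 j u)
    (hiii : ∀ u ∈ U, ∀ j k : Fin n, k ≠ j →
      mpdv k (ω0 j) u + ω0 j u * ω0 k u = mpdv j (ω0 k) u + ω0 k u * ω0 j u)
    (hiv : ∀ u ∈ U, ∀ j k : Fin n, k ≠ j →
      Matrix.single j j (1 : ℂ) * ω0 k u - ω0 k u * Matrix.single j j (1 : ℂ)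
        = Matrix.single k k (1 : ℂ) * ω0 j u
          - ω0 j u * Matrix.single k k (1 : ℂ)) :
    ∀ u ∈ U, ∀ z : ℂ, z ≠ 0 →
      (∀ j : Fin n,
        mpdv j (fun v => Matrix.diagonal v + z⁻¹ • A v) u
            + (Matrix.diagonal u + z⁻¹ • A u)
              * (z • Matrix.single j j (1 : ℂ) + ω0 j u)
          = (Matrix.of fun a b =>
              deriv (fun w : ℂ => (w • Matrix.single j j (1 : ℂ) + ω0 j u) a b) z)
            + (z • Matrix.single j j (1 : ℂ) + ω0 j u)
              * (Matrix.diagonal u + z⁻¹ • A u))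
      ∧ (∀ j k : Fin n, k ≠ j →
          mpdv k (fun v => z • Matrix.single j j (1 : ℂ) + ω0 j v) u
              + (z • Matrix.single j j (1 : ℂ) + ω0 j u)
                * (z • Matrix.single k k (1 : ℂ) + ω0 k u)
            = mpdv j (fun v => z • Matrix.single k k (1 : ℂ) + ω0 k v) u
              + (z • Matrix.single k k (1 : ℂ) + ω0 k u)
                * (z • Matrix.single j j (1 : ℂ) + ω0 j u)) := by
  intro u hu z hz
  have hAd : ∀ a b, DifferentiableAt ℂ (fun v => A v a b) u :=
    fun a b => (hA a b).differentiableAt (hU.mem_nhds hu)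
  have hcomm : ∀ j : Fin n, Matrix.diagonal u * Matrix.single j j (1:ℂ)
      = Matrix.single j j (1:ℂ) * Matrix.diagonal u := by
    intro j; rw [stdBasis_eq_diag]; exact diag_comm _ _
  have L1 : ∀ j : Fin n, mpdv j (fun v => Matrix.diagonal v + z⁻¹ • A v) u
      = Matrix.single j j (1:ℂ) + z⁻¹ • mpdv j A u := by
    intro j; ext a b
    simp only [mpdv, Matrix.of_apply, Matrix.add_apply, Matrix.smul_apply, smul_eq_mul]
    rw [fderiv_fun_add (diff_diag_entry a b u) ((hAd a b).const_mul z⁻¹),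
      ContinuousLinearMap.add_apply, fderiv_diag_entry, fderiv_const_mul (hAd a b)]
    simp
  constructor
  · intro j
    rw [L1 j, hii u hu j, deriv_lin_entry j (ω0 j u) z]
    exact aux1 z hz _ _ _ _ (hi u hu j) (hcomm j)
  · intro j k hkj
    rw [mpdv_const_add, mpdv_const_add]
    refine aux2 z _ _ _ _ _ _ (hiii u hu j k hkj) (hiv u hu j k hkj) ?_
    rw [stdBasis_eq_diag j, stdBasis_eq_diag k]; exact diag_comm _ _
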